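/- Fix natural numbers n, r, σ with 2 ≤ σ and 2 ≤ r ≤ n, and let T = { s : Fin n → Fin σ | s has exactly r runs }. If B is a natural number and there exists an injective function from T into the set of bit vectors of length B (functions Fin B → Bool), then B ≥ r·log₂(n(σ−1)/r) − log₂(n/r) − 2, where the inequality is over the real numbers. -/

import Mathlib

/-!
A string `s : Fin n → G` over a finite additive group (for us `Fin σ`, i.e. `ℤ/σ`) is determined
by its first letter together with its sequence of consecutive differences `s (i+1) - s i`, and
since both sides have `|G|^n` elements this correspondence is a bijection. The string has `r`
runs exactly when the difference sequence has `r - 1` nonzero entries, so there are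
`σ · C(n-1, r-1) · (σ-1)^(r-1)` such strings. Bounding `C(n-1, r-1) ≥ (n/r)^(r-1)` and `σ ≥ σ - 1`,
this count is at least `(n(σ-1)/r)^r / (n/r)`, and an injective encoding forces `2^B` to be at
least the count; taking `log₂` gives the bound.
-/

open Finset Fintype

theorem Nat.succ_pow_le_choose_mul_succ_pow {m k : ℕ} (hkm : k ≤ m) :
    (m + 1) ^ k ≤ m.choose k * (k + 1) ^ k := by
  -- termwise `(m + 1) (k - i) ≤ (m - i) (k + 1)`, the difference being `(m - k) (i + 1)`
  have key : (m + 1) ^ k * k.factorial ≤ m.descFactorial k * (k + 1) ^ k := by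
    have hpow (a : ℕ) : a ^ k = ∏ _i ∈ range k, a := by simp
    rw [← Nat.descFactorial_self, Nat.descFactorial_eq_prod_range,
      Nat.descFactorial_eq_prod_range, hpow (m + 1), hpow (k + 1), ← prod_mul_distrib,
      ← prod_mul_distrib]
    refine prod_le_prod' fun i hi => ?_
    have hik : i < k := mem_range.1 hi
    zify [hik.le, (hik.trans_le hkm).le]
    nlinarith
  rw [Nat.descFactorial_eq_factorial_mul_choose, mul_comm, mul_assoc] at key
  exact Nat.le_of_mul_le_mul_left key k.factorial_pos

section HammingNorm

variable {ι β : Type*} [Fintype ι] [DecidableEq ι] [Fintype β] [DecidableEq β] [Zero β]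

theorem card_filter_support_eq (D : Finset ι) :
    #{w : ι → β | ({i | w i ≠ 0} : Finset ι) = D} = (card β - 1) ^ #D := by
  have hpi : ({w : ι → β | ({i | w i ≠ 0} : Finset ι) = D} : Finset _) =
      piFinset fun i => if i ∈ D then univ.erase 0 else {0} := by
    ext w
    simp only [mem_filter, mem_univ, true_and, mem_piFinset, Finset.ext_iff]
    refine forall_congr' fun i => ?_
    split_ifs with hi <;> simp [hi]
  rw [hpi, card_piFinset]
  simp [apply_ite Finset.card]

theorem card_filter_hammingNorm_eq (k : ℕ) :
    #{w : ι → β | hammingNorm w = k} = (card ι).choose k * (card β - 1) ^ k := by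
  rw [card_eq_sum_card_fiberwise (f := fun w => ({i | w i ≠ 0} : Finset ι))
    (t := powersetCard k univ) (fun w hw => by simpa [hammingNorm] using hw)]
  have hfiber : ∀ D ∈ powersetCard k (univ : Finset ι),
      #{w ∈ {w : ι → β | hammingNorm w = k} | ({i | w i ≠ 0} : Finset ι) = D} =
        (card β - 1) ^ k := by
    intro D hD
    rw [mem_powersetCard_univ] at hD
    rw [filter_filter, ← hD, ← card_filter_support_eq]
    refine congrArg card (filter_congr fun w _ => ⟨And.right, fun h => ⟨?_, h⟩⟩)
    rw [hammingNorm, h]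
  rw [sum_congr rfl hfiber, sum_const, card_powersetCard, card_univ, smul_eq_mul]

end HammingNorm

section Runs

variable {G : Type*} {n : ℕ}

def runBreaks [DecidableEq G] (s : Fin n → G) : Finset (Fin (n - 1)) :=
  univ.filter fun i : Fin (n - 1) => s ⟨i.val, by omega⟩ ≠ s ⟨i.val + 1, by omega⟩

def diffsAndHead [AddGroup G] [NeZero n] (s : Fin n → G) : (Fin (n - 1) → G) × G :=
  (fun i => s ⟨i.val + 1, by omega⟩ - s ⟨i.val, by omega⟩, s 0)

theorem diffsAndHead_injective [AddGroup G] [NeZero n] :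
    Function.Injective (diffsAndHead : (Fin n → G) → _) := by
  intro s t hst
  simp only [diffsAndHead, Prod.ext_iff, funext_iff] at hst
  obtain ⟨hdiff, hhead⟩ := hst
  suffices ∀ j (hj : j < n), s ⟨j, hj⟩ = t ⟨j, hj⟩ from funext fun i => this i i.isLt
  intro j
  induction j with
  | zero => exact fun _ => hhead
  | succ j ih =>
    intro hj
    have hstep := hdiff ⟨j, by omega⟩
    rw [ih (by omega)] at hstep
    simpa using hstep

theorem diffsAndHead_bijective [AddGroup G] [Fintype G] [NeZero n] :
    Function.Bijective (diffsAndHead : (Fin n → G) → _) := by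
  refine (Fintype.bijective_iff_injective_and_card _).2 ⟨diffsAndHead_injective, ?_⟩
  simp only [card_fun, card_prod, Fintype.card_fin, ← pow_succ, Nat.sub_add_cancel NeZero.one_le]

theorem hammingNorm_diffsAndHead_fst [AddGroup G] [DecidableEq G] [NeZero n] (s : Fin n → G) :
    hammingNorm (diffsAndHead s).1 = #(runBreaks s) :=
  congrArg card (filter_congr fun _ _ => sub_ne_zero.trans ne_comm)

theorem card_runBreaks_eq [AddGroup G] [Fintype G] [DecidableEq G] [NeZero n] (k : ℕ) :
    card {s : Fin n → G // #(runBreaks s) = k} =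
      card G * ((n - 1).choose k * (card G - 1) ^ k) := by
  let e := (Equiv.ofBijective _ diffsAndHead_bijective).subtypeEquiv
    (p := fun s : Fin n → G => #(runBreaks s) = k) (q := fun p => hammingNorm p.1 = k)
    fun s => by rw [Equiv.ofBijective_apply, hammingNorm_diffsAndHead_fst]
  rw [card_congr (e.trans (Equiv.prodSubtypeFstEquivSubtypeProd (p := (hammingNorm · = k)))),
    card_prod, Fintype.card_subtype, card_filter_hammingNorm_eq, Fintype.card_fin, mul_comm]

end Runs

theorem pow_div_le_succ_mul_choose_mul_pow {m k : ℕ} (hkm : k ≤ m) {t : ℝ} (ht : 0 ≤ t) :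
    ((m + 1) * t / (k + 1)) ^ (k + 1) / ((m + 1) / (k + 1)) ≤
      (t + 1) * (m.choose k * t ^ k) := by
  have hchoose : (((m : ℝ) + 1) / (k + 1)) ^ k ≤ m.choose k := by
    rw [div_pow, div_le_iff₀ (by positivity)]
    exact_mod_cast Nat.succ_pow_le_choose_mul_succ_pow hkm
  have hsplit : ((m + 1) * t / (k + 1)) ^ (k + 1) / ((m + 1) / (k + 1)) =
      t * (t ^ k * (((m : ℝ) + 1) / (k + 1)) ^ k) := by
    rw [mul_comm, mul_div_assoc, mul_pow, pow_succ t, pow_succ (((m : ℝ) + 1) / (k + 1))]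
    field_simp
  rw [hsplit, mul_comm (m.choose k : ℝ)]
  gcongr
  linarith

theorem logb_sub_le_of_pow_div_le {X Y : ℝ} (hX : 0 < X) (hY : 0 < Y) {r B : ℕ}
    (h : X ^ r / Y ≤ 2 ^ B) : r * Real.logb 2 X - Real.logb 2 Y ≤ B := by
  rw [← Real.logb_pow, ← Real.logb_div (by positivity) hY.ne',
    Real.logb_le_iff_le_rpow one_lt_two (by positivity), Real.rpow_natCast]
  exact h

/-- For `2 ≤ σ` and `2 ≤ r ≤ n`: if there is an injective encoding of the set
of strings of length `n` over `{0, …, σ-1}` with exactly `r` runs into bit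
vectors of length `B`, then `B ≥ r·log₂(n(σ-1)/r) − log₂(n/r) − 2`. -/
theorem bits_lower_bound (n r σ B : ℕ) (hσ : 2 ≤ σ) (hr : 2 ≤ r) (hrn : r ≤ n)
    (henc : ∃ f : {s : Fin n → Fin σ //
        (Finset.univ.filter (fun i : Fin (n - 1) =>
          s ⟨i.val, by omega⟩ ≠ s ⟨i.val + 1, by omega⟩)).card = r - 1} →
        (Fin B → Bool), Function.Injective f) :
    (B : ℝ) ≥ (r : ℝ) * Real.logb 2 ((n : ℝ) * ((σ : ℝ) - 1) / (r : ℝ)) -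
      Real.logb 2 ((n : ℝ) / (r : ℝ)) - 2 := by
  obtain ⟨f, hf⟩ := henc
  have : NeZero σ := ⟨by omega⟩
  have : NeZero n := ⟨by omega⟩
  have hcard : σ * ((n - 1).choose (r - 1) * (σ - 1) ^ (r - 1)) ≤ 2 ^ B :=
    calc σ * ((n - 1).choose (r - 1) * (σ - 1) ^ (r - 1))
        = card {s : Fin n → Fin σ // #(runBreaks s) = r - 1} := by
          rw [card_runBreaks_eq, Fintype.card_fin]
      _ ≤ card (Fin B → Bool) := Fintype.card_le_of_injective f hf
      _ = 2 ^ B := by simp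
  obtain ⟨k, rfl⟩ : ∃ k, r = k + 1 := ⟨r - 1, by omega⟩
  obtain ⟨m, rfl⟩ : ∃ m, n = m + 1 := ⟨n - 1, by omega⟩
  obtain ⟨t, rfl⟩ : ∃ t, σ = t + 1 := ⟨σ - 1, by omega⟩
  simp only [Nat.add_sub_cancel] at hcard
  have hbits : (((m + 1) * t / (k + 1)) ^ (k + 1) / ((m + 1) / (k + 1)) : ℝ) ≤ 2 ^ B :=
    (pow_div_le_succ_mul_choose_mul_pow (by omega) t.cast_nonneg).trans (by exact_mod_cast hcard)
  have ht : (0 : ℝ) < t := by exact_mod_cast (by omega : 0 < t)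
  have hlog := logb_sub_le_of_pow_div_le (by positivity) (by positivity) hbits
  push_cast at hlog ⊢
  rw [add_sub_cancel_right]
  linarith
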